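/- arXiv:2401.15462 — 3 statements merged into one kernel-verified Lean document; each statement's English description precedes it below -/
import Mathlib

section
/- Let D, M ≥ 1, let G(x) = −x·log x − x·log M for x > 0 (and G(0) = 0). Then for all 0 ≤ a, b ≤ D/M and every 0 < μ < 1/e, one has |G(b) − G(a)| ≤ (2μ/M)·log(1/μ) + |b − a|·log(eD/μ). -/
/-!
Write `F = negMulLog`. Since `-x log x - x log M = F (M x) / M`, it suffices to bound
`|F t - F s|` for `s, t ∈ [0, D]`. Clamp both points from below at `μ`: on `[0, μ]` the function
`F` increases from `0` to `F μ = μ log (1/μ)` (as `μ ≤ 1/e`), so clamping costs at most `F μ` per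
point, while on `[μ, D]` the derivative `-log x - 1` is bounded by `log (e D / μ)`, and clamping
does not increase `|t - s|`.
-/

open Real Set

namespace Real

lemma negMulLog_mul_div {M : ℝ} (hM : M ≠ 0) (x : ℝ) :
    negMulLog (M * x) / M = -x * log x - x * log M := by
  rw [negMulLog_mul]
  field_simp
  simp only [negMulLog]
  ring

lemma monotoneOn_negMulLog : MonotoneOn negMulLog (Icc 0 (exp (-1))) := by
  refine monotoneOn_of_deriv_nonneg (convex_Icc _ _) continuous_negMulLog.continuousOn
    (differentiableOn_negMulLog.mono fun x hx => ?_) fun x hx => ?_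
  · rw [interior_Icc] at hx
    exact hx.1.ne'
  · rw [interior_Icc] at hx
    have hlog : log x < -1 := by
      simpa only [log_exp] using log_lt_log hx.1 hx.2
    rw [deriv_negMulLog hx.1.ne']
    linarith

lemma abs_negMulLog_sub_le_negMulLog {μ s t : ℝ} (hμ : μ ≤ exp (-1))
    (hs : s ∈ Icc 0 μ) (ht : t ∈ Icc 0 μ) : |negMulLog t - negMulLog s| ≤ negMulLog μ := by
  have hsub : Icc 0 μ ⊆ Icc 0 (exp (-1)) := Icc_subset_Icc_right hμ
  have hμ0 : μ ∈ Icc 0 μ := right_mem_Icc.mpr (hs.1.trans hs.2)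
  have h0 : (0 : ℝ) ∈ Icc 0 μ := left_mem_Icc.mpr (hs.1.trans hs.2)
  have bound : ∀ x ∈ Icc 0 μ, 0 ≤ negMulLog x ∧ negMulLog x ≤ negMulLog μ := fun x hx =>
    ⟨negMulLog_zero ▸ monotoneOn_negMulLog (hsub h0) (hsub hx) hx.1,
      monotoneOn_negMulLog (hsub hx) (hsub hμ0) hx.2⟩
  obtain ⟨hs₀, hs₁⟩ := bound s hs
  obtain ⟨ht₀, ht₁⟩ := bound t ht
  exact abs_sub_le_iff.mpr ⟨by linarith, by linarith⟩

lemma abs_negMulLog_max_sub_le {μ s : ℝ} (hμ₀ : 0 ≤ μ) (hμ : μ ≤ exp (-1)) (hs : 0 ≤ s) :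
    |negMulLog (max s μ) - negMulLog s| ≤ negMulLog μ := by
  rcases le_total μ s with hμs | hsμ
  · rw [max_eq_left hμs, sub_self, abs_zero]
    exact negMulLog_nonneg hμ₀ (hμ.trans (exp_le_one_iff.mpr (by norm_num)))
  · rw [max_eq_right hsμ]
    exact abs_negMulLog_sub_le_negMulLog hμ ⟨hs, hsμ⟩ ⟨hμ₀, le_rfl⟩

lemma abs_negMulLog_sub_le_mul {μ D s t : ℝ} (hμ₀ : 0 < μ) (hμ₁ : μ ≤ 1) (hD : 1 ≤ D)
    (hs : s ∈ Icc μ D) (ht : t ∈ Icc μ D) :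
    |negMulLog t - negMulLog s| ≤ log (exp 1 * D / μ) * |t - s| := by
  have hL : log (exp 1 * D / μ) = 1 + log D - log μ := by
    rw [log_div (by positivity) hμ₀.ne', log_mul (exp_ne_zero 1) (by positivity), log_exp]
  have hlogD : 0 ≤ log D := log_nonneg hD
  have hlogμ : log μ ≤ 0 := log_nonpos hμ₀.le hμ₁
  have hderiv_bound : ∀ x ∈ Icc μ D, ‖-log x - 1‖ ≤ log (exp 1 * D / μ) := fun x hx => by
    have hx₀ : 0 < x := hμ₀.trans_le hx.1
    have h₁ : log μ ≤ log x := log_le_log hμ₀ hx.1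
    have h₂ : log x ≤ log D := log_le_log hx₀ hx.2
    rw [norm_eq_abs, abs_le, hL]
    constructor <;> linarith
  simpa only [norm_eq_abs] using (convex_Icc μ D).norm_image_sub_le_of_norm_hasDerivWithin_le
    (fun x hx => (hasDerivAt_negMulLog (hμ₀.trans_le hx.1).ne').hasDerivWithinAt)
    hderiv_bound hs ht

lemma abs_negMulLog_sub_le {μ D s t : ℝ} (hμ₀ : 0 < μ) (hμ : μ ≤ exp (-1)) (hD : 1 ≤ D)
    (hs : s ∈ Icc 0 D) (ht : t ∈ Icc 0 D) :
    |negMulLog t - negMulLog s| ≤ 2 * negMulLog μ + |t - s| * log (exp 1 * D / μ) := by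
  have hμ₁ : μ ≤ 1 := hμ.trans (exp_le_one_iff.mpr (by norm_num))
  have hL : 0 ≤ log (exp 1 * D / μ) :=
    log_nonneg ((one_le_div hμ₀).mpr (by nlinarith [add_one_le_exp (1 : ℝ)]))
  have hclamp : ∀ x ∈ Icc 0 D, max x μ ∈ Icc μ D := fun x hx =>
    ⟨le_max_right x μ, max_le hx.2 (hμ₁.trans hD)⟩
  have hmid := abs_negMulLog_sub_le_mul hμ₀ hμ₁ hD (hclamp s hs) (hclamp t ht)
  have hs' := abs_negMulLog_max_sub_le hμ₀.le hμ hs.1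
  have ht' := (abs_sub_comm _ _).trans_le (abs_negMulLog_max_sub_le hμ₀.le hμ ht.1)
  calc |negMulLog t - negMulLog s|
      ≤ |negMulLog t - negMulLog (max t μ)| + |negMulLog (max t μ) - negMulLog (max s μ)|
        + |negMulLog (max s μ) - negMulLog s| :=
        (abs_sub_le _ _ _).trans (by rw [add_assoc]; gcongr; exact abs_sub_le _ _ _)
    _ ≤ negMulLog μ + log (exp 1 * D / μ) * |max t μ - max s μ| + negMulLog μ := by gcongr
    _ ≤ 2 * negMulLog μ + |t - s| * log (exp 1 * D / μ) := by
        linarith [mul_le_mul_of_nonneg_left (abs_max_sub_max_le_abs t s μ) hL]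

end Real

/-- Taylor-type estimate for `G(x) = -x log x - x log M`. -/
theorem stmt_5 (D M : ℝ) (hD : 1 ≤ D) (hM : 1 ≤ M)
    (a b : ℝ) (ha0 : 0 ≤ a) (ha1 : a ≤ D / M) (hb0 : 0 ≤ b) (hb1 : b ≤ D / M)
    (μ : ℝ) (hμ0 : 0 < μ) (hμ1 : μ < 1 / Real.exp 1) :
    |(-b * Real.log b - b * Real.log M) - (-a * Real.log a - a * Real.log M)| ≤
      2 * μ / M * Real.log (1 / μ) + |b - a| * Real.log (Real.exp 1 * D / μ) := by
  have hM₀ : 0 < M := one_pos.trans_le hM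
  have hμ : μ ≤ exp (-1) := by rw [exp_neg, inv_eq_one_div]; exact hμ1.le
  have hscaled : ∀ x, 0 ≤ x → x ≤ D / M → M * x ∈ Icc 0 D := fun x hx₀ hx₁ =>
    ⟨by positivity, (le_div_iff₀' hM₀).mp hx₁⟩
  have key := abs_negMulLog_sub_le hμ0 hμ hD (hscaled a ha0 ha1) (hscaled b hb0 hb1)
  rw [← negMulLog_mul_div hM₀.ne' a, ← negMulLog_mul_div hM₀.ne' b, ← sub_div, abs_div,
    abs_of_pos hM₀, div_le_iff₀ hM₀]
  calc _ ≤ 2 * negMulLog μ + |M * b - M * a| * log (exp 1 * D / μ) := key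
    _ = _ := by
      rw [← mul_sub, abs_mul, abs_of_pos hM₀, negMulLog, one_div, log_inv]
      field_simp
end

section
/- Let f : ℝ^d → ℝ₊ be an integrable log-concave function with 0 < ∫f < ∞. Then f(0) ≥ e^{−d} · sup_{x ∈ ℝ^d} f(x), provided the barycenter of f is at the origin (∫ x f(x) dx = 0). -/
/-!
Write `f = e^{-W}` with `W` convex on the convex set `{f > 0}`. Because the barycenter is `0` and
`∫ f > 0`, the origin is an interior point of `{f > 0}`: otherwise a nonzero functional `ℓ ≤ 0` on
`{f > 0}` would satisfy `∫ ℓ f = 0`, forcing `f = 0` almost everywhere. Hence `W` has a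
subgradient at `0`, i.e. `f x ≤ f 0 · e^{-ℓ x}`. For `m` and `s ∈ (0, 1)`, log-concavity gives
`f (s x + (1 - s) m) ≥ f(m)^{1-s} f(x)^s`, and the subgradient bound together with `e^y ≥ 1 + y`
gives `f(x)^s ≥ f(0)^{s-1} f(x) (1 + (1 - s) ℓ x)`. Integrating, the barycenter condition kills the
`ℓ` term and the change of variables contributes `s^{-d}`, so `(f m / f 0)^{1-s} ≤ s^{-d}`.
Letting `s → 1` yields `f m ≤ e^d f 0`.
-/

open MeasureTheory Set Filter Topology Module

theorem ConvexOn.exists_le_add_of_continuousAt {E : Type*} [NormedAddCommGroup E]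
    [NormedSpace ℝ E] {s : Set E} {φ : E → ℝ} {x₀ : E} (hφ : ConvexOn ℝ s φ)
    (hx₀ : x₀ ∈ interior s) (hcont : ContinuousAt φ x₀) :
    ∃ ℓ : StrongDual ℝ E, ∀ x ∈ s, φ x₀ + ℓ (x - x₀) ≤ φ x := by
  -- Separate the graph point `(x₀, φ x₀)` from the interior of the epigraph; the separating
  -- functional is not vertical because `(x₀, φ x₀ + 1)` is an interior point.
  set epi : Set (E × ℝ) := {p | p.1 ∈ s ∧ φ p.1 ≤ p.2}
  have above_mem : (x₀, φ x₀ + 1) ∈ interior epi := by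
    have hU : {x | x ∈ s ∧ φ x < φ x₀ + 1 / 2} ∈ 𝓝 x₀ :=
      inter_mem (mem_interior_iff_mem_nhds.mp hx₀) (hcont.eventually (gt_mem_nhds (by linarith)))
    rw [mem_interior_iff_mem_nhds]
    filter_upwards [prod_mem_nhds hU (Ioi_mem_nhds (by linarith : φ x₀ + 1 / 2 < φ x₀ + 1))]
      with p hp
    exact ⟨hp.1.1, hp.1.2.le.trans hp.2.le⟩
  have graph_notMem : (x₀, φ x₀) ∉ interior epi := by
    intro h
    have : ∀ᶠ r in 𝓝 (φ x₀), (x₀, r) ∈ epi :=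
      (Continuous.prodMk_right x₀).continuousAt.preimage_mem_nhds (mem_interior_iff_mem_nhds.mp h)
    obtain ⟨r, hr, hlt⟩ := ((this.filter_mono nhdsWithin_le_nhds).and
      (self_mem_nhdsWithin : Iio (φ x₀) ∈ 𝓝[<] φ x₀)).exists
    exact (not_le.mpr hlt) hr.2
  obtain ⟨ψ, hψ⟩ := geometric_hahn_banach_open_point hφ.convex_epigraph.interior isOpen_interior
    graph_notMem
  have hψ_epi : ∀ p ∈ epi, ψ p ≤ ψ (x₀, φ x₀) := by
    intro p hp
    have : p ∈ closure (interior epi) := by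
      rw [hφ.convex_epigraph.closure_interior_eq_closure_of_nonempty_interior ⟨_, above_mem⟩]
      exact subset_closure hp
    exact closure_minimal (fun q hq => (hψ q hq).le) (isClosed_Iic.preimage ψ.continuous) this
  have hψ_apply : ∀ x r, ψ (x, r) = ψ (x, 0) + r * ψ (0, 1) := by
    intro x r
    rw [← smul_eq_mul, ← map_smul, ← map_add]
    simp
  have hc : ψ (0, 1) < 0 := by
    have := hψ _ above_mem
    rw [hψ_apply x₀, hψ_apply x₀ (φ x₀)] at this
    linarith
  refine ⟨-(ψ (0, 1))⁻¹ • ψ.comp (ContinuousLinearMap.inl ℝ E ℝ), fun x hx => ?_⟩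
  have h := hψ_epi (x, φ x) ⟨hx, le_rfl⟩
  rw [hψ_apply x, hψ_apply x₀] at h
  have hsub : ψ (x - x₀, 0) = ψ (x, 0) - ψ (x₀, 0) := by
    rw [← map_sub]
    simp
  simp only [FunLike.coe_smul, Pi.smul_apply, ContinuousLinearMap.comp_apply,
    ContinuousLinearMap.inl_apply, hsub, smul_eq_mul]
  rw [neg_mul, inv_mul_eq_div, ← sub_eq_add_neg, sub_le_iff_le_add, ← sub_le_iff_le_add',
    le_div_iff_of_neg hc]
  linarith

theorem Real.rpow_sub_one_mul_le_rpow {a b q s : ℝ} (ha : 0 ≤ a) (hb : 0 < b)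
    (hab : a ≤ b * Real.exp (-q)) (hs₀ : 0 < s) (hs₁ : s ≤ 1) :
    b ^ (s - 1) * (a + (1 - s) * (q * a)) ≤ a ^ s := by
  rcases ha.eq_or_lt with rfl | ha
  · simp [Real.zero_rpow hs₀.ne']
  calc b ^ (s - 1) * (a + (1 - s) * (q * a)) = a * (b ^ (s - 1) * ((1 - s) * q + 1)) := by ring
    _ ≤ a * (b ^ (s - 1) * Real.exp ((1 - s) * q)) := by gcongr; exact Real.add_one_le_exp _
    _ = a * (b * Real.exp (-q)) ^ (s - 1) := by
        rw [Real.mul_rpow hb.le (Real.exp_pos _).le, ← Real.exp_mul]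
        ring_nf
    _ ≤ a * a ^ (s - 1) :=
        mul_le_mul_of_nonneg_left (Real.rpow_le_rpow_of_nonpos ha hab (by linarith)) ha.le
    _ = a ^ s := by rw [Real.rpow_sub_one ha.ne', mul_div_cancel₀ _ ha.ne']

theorem Real.le_exp_of_forall_rpow_one_sub_le {t : ℝ} {d : ℕ} (ht : 0 < t)
    (h : ∀ s ∈ Ioo (0 : ℝ) 1, t ^ (1 - s) ≤ (s ^ d)⁻¹) : t ≤ Real.exp d := by
  rw [← Real.log_le_iff_le_exp ht, le_iff_forall_one_lt_le_mul₀ (Nat.cast_nonneg d)]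
  intro ε hε
  have hε₀ : 0 < ε := by linarith
  have hs : ε⁻¹ ∈ Ioo (0 : ℝ) 1 := ⟨inv_pos.mpr hε₀, inv_lt_one_of_one_lt₀ hε⟩
  have hlog := Real.log_le_log (by positivity) (h ε⁻¹ hs)
  rw [Real.log_rpow ht, Real.log_inv, Real.log_pow, Real.log_inv] at hlog
  have hε_log := Real.log_le_sub_one_of_pos hε₀
  have : (1 - ε⁻¹) * Real.log t ≤ (1 - ε⁻¹) * (d * ε) := by
    calc (1 - ε⁻¹) * Real.log t ≤ d * Real.log ε := by linarith
      _ ≤ d * (ε - 1) := by gcongr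
      _ = (1 - ε⁻¹) * (d * ε) := by field_simp
  exact le_of_mul_le_mul_left this (by linarith [hs.2])

def LogConcave {E : Type*} [AddCommGroup E] [Module ℝ E] (f : E → ℝ) : Prop :=
  ∀ x y : E, ∀ t : ℝ, 0 ≤ t → t ≤ 1 → f x ^ t * f y ^ (1 - t) ≤ f (t • x + (1 - t) • y)

theorem LogConcave.convexOn_neg_log {E : Type*} [AddCommGroup E] [Module ℝ E] {f : E → ℝ}
    (hf : LogConcave f) : ConvexOn ℝ {x | 0 < f x} (fun x => -Real.log (f x)) := by
  have key : ∀ x, 0 < f x → ∀ y, 0 < f y → ∀ a : ℝ, 0 ≤ a → a ≤ 1 →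
      0 < f (a • x + (1 - a) • y) ∧
        a * Real.log (f x) + (1 - a) * Real.log (f y) ≤ Real.log (f (a • x + (1 - a) • y)) := by
    intro x hx y hy a ha0 ha1
    have hprod : 0 < f x ^ a * f y ^ (1 - a) := by positivity
    have h := hf x y a ha0 ha1
    refine ⟨hprod.trans_le h, ?_⟩
    have := Real.log_le_log hprod h
    rwa [Real.log_mul (by positivity) (by positivity), Real.log_rpow hx, Real.log_rpow hy] at this
  refine ⟨fun x hx y hy a b ha hb hab => ?_, fun x hx y hy a b ha hb hab => ?_⟩
  · obtain rfl : b = 1 - a := by linarith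
    exact (key x hx y hy a ha (by linarith)).1
  · obtain rfl : b = 1 - a := by linarith
    have := (key x hx y hy a ha (by linarith)).2
    simp only [smul_eq_mul]
    linarith

theorem LogConcave.exists_le_mul_exp {E : Type*} [NormedAddCommGroup E] [NormedSpace ℝ E]
    [FiniteDimensional ℝ E] {f : E → ℝ} (hf : LogConcave f) {x₀ : E}
    (hx₀ : x₀ ∈ interior {x | 0 < f x}) :
    ∃ ℓ : StrongDual ℝ E, ∀ x, f x ≤ f x₀ * Real.exp (-ℓ (x - x₀)) := by
  have hf₀ : 0 < f x₀ := interior_subset (s := {x | 0 < f x}) hx₀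
  obtain ⟨ℓ, hℓ⟩ := hf.convexOn_neg_log.exists_le_add_of_continuousAt hx₀
    (hf.convexOn_neg_log.continuousOn_interior.continuousAt (isOpen_interior.mem_nhds hx₀))
  refine ⟨ℓ, fun x => ?_⟩
  rcases le_or_gt (f x) 0 with hx | hx
  · exact hx.trans (by positivity)
  have hlog : Real.log (f x) ≤ Real.log (f x₀) + -ℓ (x - x₀) := by linarith [hℓ x hx]
  calc f x = Real.exp (Real.log (f x)) := (Real.exp_log hx).symm
    _ ≤ Real.exp (Real.log (f x₀) + -ℓ (x - x₀)) := Real.exp_le_exp.mpr hlog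
    _ = f x₀ * Real.exp (-ℓ (x - x₀)) := by rw [Real.exp_add, Real.exp_log hf₀]

section

variable {E : Type*} [NormedAddCommGroup E] [NormedSpace ℝ E] [MeasurableSpace E]
  {μ : Measure E} {f : E → ℝ}

theorem integrable_clm_mul (ℓ : StrongDual ℝ E) (hf : Integrable (fun x => f x • x) μ) :
    Integrable (fun x => ℓ x * f x) μ := by
  simpa [mul_comm] using ℓ.integrable_comp hf

theorem integral_clm_mul [CompleteSpace E] (ℓ : StrongDual ℝ E)
    (hf : Integrable (fun x => f x • x) μ) :
    ∫ x, ℓ x * f x ∂μ = ℓ (∫ x, f x • x ∂μ) := by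
  rw [← ℓ.integral_comp_comm hf]
  simp [mul_comm]

variable [BorelSpace E] [FiniteDimensional ℝ E] [μ.IsAddHaarMeasure]

theorem ae_eq_zero_of_integral_clm_mul_eq_zero (hnn : 0 ≤ f) {ℓ : StrongDual ℝ E} (hℓ : ℓ ≠ 0)
    (hℓf : ∀ x, 0 < f x → ℓ x ≤ 0) (hint : Integrable (fun x => ℓ x * f x) μ)
    (h : ∫ x, ℓ x * f x ∂μ = 0) : f =ᵐ[μ] 0 := by
  have hprod : (fun x => -(ℓ x * f x)) =ᵐ[μ] 0 := by
    refine (integral_eq_zero_iff_of_nonneg (f := fun x => -(ℓ x * f x)) (fun x => ?_)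
      hint.neg).mp (by rw [integral_neg, h, neg_zero])
    rcases (hnn x).eq_or_lt with hx | hx
    · simp [← hx]
    · exact neg_nonneg.mpr (mul_nonpos_of_nonpos_of_nonneg (hℓf x hx) hx.le)
  have hker : ∀ᵐ x ∂μ, ℓ x ≠ 0 := by
    have : LinearMap.ker (ℓ : E →ₗ[ℝ] ℝ) ≠ ⊤ := fun htop =>
      hℓ (ContinuousLinearMap.coe_injective (LinearMap.ker_eq_top.mp htop))
    rw [ae_iff]
    exact measure_mono_null (fun x hx => by simpa using hx) (Measure.addHaar_submodule μ _ this)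
  filter_upwards [hprod, hker] with x hx hℓx
  simpa [hℓx] using hx

theorem zero_mem_interior_of_integral_smul_eq_zero (hnn : 0 ≤ f)
    (hconv : Convex ℝ {x | 0 < f x}) (hpos : 0 < ∫ x, f x ∂μ)
    (hbar_int : Integrable (fun x => f x • x) μ) (hbar : ∫ x, f x • x ∂μ = 0) :
    (0 : E) ∈ interior {x | 0 < f x} := by
  by_contra h₀
  suffices f =ᵐ[μ] 0 by simp [integral_congr_ae this] at hpos
  rcases (interior {x | 0 < f x}).eq_empty_or_nonempty with hempty | hne
  · have hnull : μ {x | 0 < f x} = 0 := by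
      refine measure_mono_null (fun x hx => ?_) (hconv.addHaar_frontier μ)
      simpa [frontier, hempty] using subset_closure hx
    refine measure_mono_null (fun x hx => ?_) hnull
    exact (hnn x).lt_of_ne (Ne.symm hx)
  · obtain ⟨ℓ, u, hℓ, hℓs, hu⟩ := geometric_hahn_banach_of_nonempty_interior hconv
      (convex_singleton 0) (disjoint_singleton_right.mpr h₀) hne (singleton_nonempty 0)
    refine ae_eq_zero_of_integral_clm_mul_eq_zero hnn hℓ
      (fun x hx => (hℓs x hx).trans (by simpa using hu 0 rfl)) (integrable_clm_mul ℓ hbar_int) ?_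
    rw [integral_clm_mul ℓ hbar_int, hbar, map_zero]

theorem integral_comp_smul_add_of_nonneg (g : E → ℝ) {s : ℝ} (hs : 0 ≤ s) (c : E) :
    ∫ x, g (s • x + c) ∂μ = (s ^ finrank ℝ E)⁻¹ * ∫ x, g x ∂μ := by
  rw [Measure.integral_comp_smul_of_nonneg μ (fun y => g (y + c)) s (hR := hs),
    integral_add_right_eq_self, smul_eq_mul]

end

namespace LogConcave

variable {E : Type*} [NormedAddCommGroup E] [NormedSpace ℝ E] [MeasurableSpace E] [BorelSpace E]
  [FiniteDimensional ℝ E] {μ : Measure E} [μ.IsAddHaarMeasure] {f : E → ℝ}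

theorem rpow_one_sub_le_of_integral_smul_eq_zero (hf : LogConcave f) (hnn : 0 ≤ f)
    (hint : Integrable f μ) (hpos : 0 < ∫ x, f x ∂μ)
    (hbar_int : Integrable (fun x => f x • x) μ) (hbar : ∫ x, f x • x ∂μ = 0)
    (hf₀ : 0 < f 0) {ℓ : StrongDual ℝ E} (hℓ : ∀ x, f x ≤ f 0 * Real.exp (-ℓ x))
    (m : E) {s : ℝ} (hs : s ∈ Ioo (0 : ℝ) 1) :
    (f m / f 0) ^ (1 - s) ≤ (s ^ finrank ℝ E)⁻¹ := by
  obtain ⟨hs₀, hs₁⟩ := hs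
  have hpt : ∀ x, f m ^ (1 - s) * (f 0 ^ (s - 1) * (f x + (1 - s) * (ℓ x * f x))) ≤
      f (s • x + (1 - s) • m) := fun x =>
    calc _ ≤ f m ^ (1 - s) * f x ^ s := mul_le_mul_of_nonneg_left
          (Real.rpow_sub_one_mul_le_rpow (hnn x) hf₀ (hℓ x) hs₀ hs₁.le) (Real.rpow_nonneg (hnn m) _)
      _ ≤ f (s • x + (1 - s) • m) := by rw [mul_comm]; exact hf x m s hs₀.le hs₁.le
  have hlin := integrable_clm_mul ℓ hbar_int
  have hint_lower : ∫ x, f m ^ (1 - s) * (f 0 ^ (s - 1) * (f x + (1 - s) * (ℓ x * f x))) ∂μ =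
      f m ^ (1 - s) * f 0 ^ (s - 1) * ∫ x, f x ∂μ := by
    rw [integral_const_mul, integral_const_mul, integral_add hint (hlin.const_mul _),
      integral_const_mul, integral_clm_mul ℓ hbar_int, hbar, map_zero]
    ring
  have hmono : f m ^ (1 - s) * f 0 ^ (s - 1) * ∫ x, f x ∂μ ≤
      (s ^ finrank ℝ E)⁻¹ * ∫ x, f x ∂μ := by
    rw [← hint_lower, ← integral_comp_smul_add_of_nonneg f hs₀.le]
    exact integral_mono (((hint.add (hlin.const_mul _)).const_mul _).const_mul _)
      ((hint.comp_add_right ((1 - s) • m)).comp_smul hs₀.ne') hpt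
  have hratio : (f m / f 0) ^ (1 - s) = f m ^ (1 - s) * f 0 ^ (s - 1) := by
    rw [Real.div_rpow (hnn m) hf₀.le, div_eq_mul_inv, ← Real.rpow_neg hf₀.le, neg_sub]
  rw [hratio]
  exact le_of_mul_le_mul_right hmono hpos

theorem le_exp_finrank_mul_of_integral_smul_eq_zero (hf : LogConcave f) (hnn : 0 ≤ f)
    (hint : Integrable f μ) (hpos : 0 < ∫ x, f x ∂μ)
    (hbar_int : Integrable (fun x => f x • x) μ) (hbar : ∫ x, f x • x ∂μ = 0) (m : E) :
    f m ≤ Real.exp (finrank ℝ E) * f 0 := by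
  have h₀ := zero_mem_interior_of_integral_smul_eq_zero hnn hf.convexOn_neg_log.1 hpos
    hbar_int hbar
  have hf₀ : 0 < f 0 := interior_subset (s := {x | 0 < f x}) h₀
  obtain ⟨ℓ, hℓ⟩ := hf.exists_le_mul_exp h₀
  simp only [sub_zero] at hℓ
  rcases (hnn m).eq_or_lt with hm | hm
  · rw [← hm]
    positivity
  rw [← div_le_iff₀ hf₀]
  exact Real.le_exp_of_forall_rpow_one_sub_le (div_pos hm hf₀) fun s hs =>
    hf.rpow_one_sub_le_of_integral_smul_eq_zero hnn hint hpos hbar_int hbar hf₀ hℓ m hs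

end LogConcave

/-- For a centered integrable log-concave function `f : ℝ^d → ℝ₊` with positive
integral, `f(0) ≥ e^{-d} sup f` (Fradelizi's inequality). -/
theorem stmt_8 (d : ℕ) (f : (Fin d → ℝ) → ℝ)
    (hnn : ∀ x, 0 ≤ f x)
    (hlc : ∀ x y : Fin d → ℝ, ∀ t : ℝ, 0 ≤ t → t ≤ 1 →
      f x ^ t * f y ^ (1 - t) ≤ f (t • x + (1 - t) • y))
    (hint : Integrable f)
    (hpos : 0 < ∫ x, f x)
    (hbar_int : ∀ i, Integrable (fun x => x i * f x))
    (hbar : ∀ i, (∫ x, x i * f x) = 0) :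
    Real.exp (-(d : ℝ)) * (⨆ x : Fin d → ℝ, f x) ≤ f 0 := by
  have hcoord : ∀ i, Integrable (fun x : Fin d → ℝ => (f x • x) i) := fun i => by
    simpa only [Pi.smul_apply, smul_eq_mul, mul_comm] using hbar_int i
  have hbar_vec : ∫ x, f x • x = 0 := funext fun i => by
    rw [eval_integral hcoord]
    simpa only [Pi.smul_apply, smul_eq_mul, mul_comm, Pi.zero_apply] using hbar i
  have hmax : ∀ m, f m ≤ Real.exp d * f 0 := by
    simpa using LogConcave.le_exp_finrank_mul_of_integral_smul_eq_zero hlc hnn hint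
      hpos (Integrable.of_eval hcoord) hbar_vec
  calc Real.exp (-(d : ℝ)) * (⨆ x, f x) ≤ Real.exp (-(d : ℝ)) * (Real.exp d * f 0) := by
        gcongr
        exact ciSup_le hmax
    _ = f 0 := by rw [← mul_assoc, ← Real.exp_add, neg_add_cancel, Real.exp_zero, one_mul]
end

section
/- Let K be a convex body in ℝ^d of volume 1 with barycenter at the origin. Then the circumradius satisfies R(K) ≤ (d+1) · λ_max(Cov(K))^{1/2}, where Cov(K)_{ij} = ∫_K x_i x_j dx and λ_max denotes the largest eigenvalue. -/
/-!
Fix `x ∈ K` with `x ≠ 0`, put `u = x / ‖x‖`, `b = ‖x‖` and `F s = |K ∩ {⟪u, y⟫ ≥ s}|`.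
The homothety with centre `x` and ratio `(b - t) / (b - s)` maps `K ∩ {⟪u, y⟫ ≥ s}` into
`K ∩ {⟪u, y⟫ ≥ t}`, so `F s / (b - s) ^ d` is nondecreasing on `(-∞, b)`. Hence for `p < b` the
difference `F s - c (b - s) ^ d`, with `c` chosen to vanish at `p`, changes sign only at `p`, and
`∫_a^b (s - p) F s ds ≥ 0` as soon as `∫_a^b (s - p) (b - s) ^ d ds = 0`, which is the case for
`a = -b / d`, `p = -b / (d (d + 2))`. By Fubini this integral is half of
`∫_K ((clamp_[a,b] ⟪u, y⟫ - p)² - (a - p)²) dy`; clamping to an interval containing `p` only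
decreases `(· - p)²`, and the barycenter is `0`, so
`∫_K ⟪u, y⟫² ≥ (a - p)² - p² = b² / (d (d + 2)) ≥ b² / (d + 1)²`.
-/

open MeasureTheory Set Module

section Homothety

variable {E : Type*} [NormedAddCommGroup E] [NormedSpace ℝ E] [FiniteDimensional ℝ E]
  [MeasurableSpace E] [BorelSpace E] (μ : Measure E) [μ.IsAddHaarMeasure]

theorem Convex.addHaar_inter_le_homothety {K : Set E} (hK : Convex ℝ K) {x : E} (hx : x ∈ K)
    (ℓ : E →ₗ[ℝ] ℝ) {s t : ℝ} (hst : s ≤ t) (htb : t ≤ ℓ x) (hsb : s < ℓ x) :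
    ENNReal.ofReal (((ℓ x - t) / (ℓ x - s)) ^ finrank ℝ E) * μ (K ∩ {y | s ≤ ℓ y})
      ≤ μ (K ∩ {y | t ≤ ℓ y}) := by
  set r := (ℓ x - t) / (ℓ x - s)
  have hr : r ∈ Icc (0 : ℝ) 1 :=
    ⟨div_nonneg (by linarith) (by linarith), div_le_one_of_le₀ (by linarith) (by linarith)⟩
  have hmaps : AffineMap.homothety x r '' (K ∩ {y | s ≤ ℓ y}) ⊆ K ∩ {y | t ≤ ℓ y} := by
    rintro _ ⟨y, ⟨hyK, hys⟩, rfl⟩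
    rw [AffineMap.homothety_apply, vsub_eq_sub, vadd_eq_add, add_comm]
    refine ⟨hK.add_smul_sub_mem hx hyK hr, ?_⟩
    have hrs : r * (ℓ x - s) = ℓ x - t := div_mul_cancel₀ _ (by linarith)
    have hys : s ≤ ℓ y := hys
    show t ≤ ℓ (x + r • (y - x))
    rw [map_add, map_smul, map_sub, smul_eq_mul]
    nlinarith [mul_le_mul_of_nonneg_left hys hr.1]
  calc _ = μ (AffineMap.homothety x r '' (K ∩ {y | s ≤ ℓ y})) := by
        rw [Measure.addHaar_image_homothety, abs_of_nonneg (pow_nonneg hr.1 _)]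
    _ ≤ _ := measure_mono hmaps

theorem Convex.measureReal_restrict_mul_le {K : Set E} (hK : Convex ℝ K) (hKfin : μ K ≠ ⊤)
    {x : E} (hx : x ∈ K) (ℓ : E →ₗ[ℝ] ℝ) {s t : ℝ} (hst : s ≤ t) (htb : t < ℓ x) :
    (μ.restrict K).real {y | s ≤ ℓ y} * (ℓ x - t) ^ finrank ℝ E
      ≤ (μ.restrict K).real {y | t ≤ ℓ y} * (ℓ x - s) ^ finrank ℝ E := by
  have hsb : 0 < ℓ x - s := by linarith
  have hℓ : Measurable ℓ := ℓ.continuous_of_finiteDimensional.measurable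
  have h := ENNReal.toReal_mono (measure_ne_top_of_subset inter_subset_left hKfin)
    (hK.addHaar_inter_le_homothety μ hx ℓ hst htb.le (by linarith))
  rw [ENNReal.toReal_mul, ENNReal.toReal_ofReal (by positivity), div_pow,
    div_mul_eq_mul_div, div_le_iff₀ (by positivity)] at h
  simpa only [measureReal_restrict_apply (measurableSet_le measurable_const hℓ), inter_comm,
    measureReal_def, mul_comm] using h

end Homothety

theorem integral_intervalIntegral_clamp_eq {α : Type*} [MeasurableSpace α] (μ : Measure α)
    [IsFiniteMeasure μ] {X : α → ℝ} (hX : Measurable X) {g : ℝ → ℝ} (hg : Continuous g)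
    (a b : ℝ) :
    ∫ x, (∫ s in a..max a (min (X x) b), g s) ∂μ
      = ∫ s in Ioc a b, g s * μ.real {x | s ≤ X x} := by
  set f : α → ℝ → ℝ := fun x s => if s ≤ X x then g s else 0
  have hinner : ∀ x, ∫ s in a..max a (min (X x) b), g s = ∫ s in Ioc a b, f x s := by
    intro x
    have hIoc : Ioc a (max a (min (X x) b)) = Ioc a b ∩ Iic (X x) := by
      ext s
      simp only [mem_Ioc, mem_inter_iff, mem_Iic, le_max_iff, le_min_iff]
      constructor
      · rintro ⟨has, h | h⟩ <;> [exact absurd h has.not_ge; exact ⟨⟨has, h.2⟩, h.1⟩]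
      · rintro ⟨⟨has, hsb⟩, hsX⟩
        exact ⟨has, Or.inr ⟨hsX, hsb⟩⟩
    rw [intervalIntegral.integral_of_le (le_max_left _ _), hIoc,
      ← setIntegral_indicator measurableSet_Iic]
    rfl
  have hmeas : Measurable (Function.uncurry f) :=
    Measurable.ite (measurableSet_le measurable_snd (hX.comp measurable_fst))
      (hg.measurable.comp measurable_snd) measurable_const
  have hint : Integrable (Function.uncurry f) (μ.prod (volume.restrict (Ioc a b))) := by
    refine Integrable.mono' ((hg.integrableOn_Ioc (a := a) (b := b)).norm.comp_snd μ)
      hmeas.aestronglyMeasurable (Filter.Eventually.of_forall fun p => ?_)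
    simp only [Function.uncurry, f]
    split_ifs <;> simp
  calc ∫ x, (∫ s in a..max a (min (X x) b), g s) ∂μ
      = ∫ x, (∫ s in Ioc a b, f x s) ∂μ := by simp_rw [hinner]
    _ = ∫ s in Ioc a b, (∫ x, f x s ∂μ) := integral_integral_swap hint
    _ = ∫ s in Ioc a b, g s * μ.real {x | s ≤ X x} := by
      refine setIntegral_congr_fun measurableSet_Ioc fun s _ => ?_
      rw [mul_comm, ← smul_eq_mul,
        ← integral_indicator_const _ (measurableSet_le measurable_const hX)]
      rfl

theorem intervalIntegral_sub_mul_nonneg_of_cone {F : ℝ → ℝ} {a b p : ℝ} {d : ℕ} (hab : a ≤ b)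
    (hpb : p < b) (hF : IntervalIntegrable F volume a b)
    (hcone : ∀ s t, s ≤ t → t < b → F s * (b - t) ^ d ≤ F t * (b - s) ^ d)
    (hzero : ∫ s in a..b, (s - p) * (b - s) ^ d = 0) :
    0 ≤ ∫ s in a..b, (s - p) * F s := by
  have hpt : ∀ s < b, F p * ((s - p) * (b - s) ^ d) ≤ (b - p) ^ d * ((s - p) * F s) := by
    intro s hs
    rcases le_total s p with h | h
    · nlinarith [mul_le_mul_of_nonpos_left (hcone s p h hpb) (sub_nonpos.2 h)]
    · nlinarith [mul_le_mul_of_nonneg_left (hcone p s h hs) (sub_nonneg.2 h)]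
  have hmono := intervalIntegral.integral_mono_on_of_le_Ioo hab
    ((Continuous.intervalIntegrable (by fun_prop) _ _).const_mul _)
    ((hF.continuousOn_mul (by fun_prop)).const_mul _) fun s hs => hpt s hs.2
  rw [intervalIntegral.integral_const_mul, intervalIntegral.integral_const_mul, hzero,
    mul_zero] at hmono
  exact (mul_nonneg_iff_of_pos_left (pow_pos (sub_pos.2 hpb) d)).1 hmono

theorem integral_sq_clamp_sub_sq_nonneg_of_cone {α : Type*} [MeasurableSpace α] (μ : Measure α)
    [IsFiniteMeasure μ] {X : α → ℝ} (hX : Measurable X) {a b p : ℝ} {d : ℕ} (hab : a ≤ b)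
    (hpb : p < b)
    (hcone : ∀ s t, s ≤ t → t < b →
      μ.real {x | s ≤ X x} * (b - t) ^ d ≤ μ.real {x | t ≤ X x} * (b - s) ^ d)
    (hzero : ∫ s in a..b, (s - p) * (b - s) ^ d = 0) :
    0 ≤ ∫ x, ((max a (min (X x) b) - p) ^ 2 - (a - p) ^ 2) ∂μ := by
  have hF : IntervalIntegrable (fun s => μ.real {x | s ≤ X x}) volume a b :=
    Antitone.intervalIntegrable fun s t hst => measureReal_mono fun x hx => hst.trans hx
  have hlayer : ∫ x, ((max a (min (X x) b) - p) ^ 2 - (a - p) ^ 2) ∂μ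
      = 2 * ∫ s in a..b, (s - p) * μ.real {x | s ≤ X x} := by
    rw [← intervalIntegral.integral_const_mul, intervalIntegral.integral_of_le hab]
    simp_rw [← mul_assoc]
    rw [← integral_intervalIntegral_clamp_eq μ hX (g := fun s => 2 * (s - p)) (by fun_prop)]
    refine integral_congr_ae (ae_of_all _ fun x => ?_)
    simp
    ring
  rw [hlayer]
  exact mul_nonneg zero_le_two (intervalIntegral_sub_mul_nonneg_of_cone hab hpb hF hcone hzero)

theorem intervalIntegral_add_mul_sub_pow_eq_zero (b : ℝ) {d : ℕ} (hd : d ≠ 0) :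
    ∫ s in -(b / d)..b, (s + b / (d * (d + 2))) * (b - s) ^ d = 0 := by
  have hd' : (d : ℝ) ≠ 0 := Nat.cast_ne_zero.2 hd
  have hL : b - -(b / d) = b * (d + 1) / d := by field_simp; ring
  calc ∫ s in -(b / d)..b, (s + b / (d * (d + 2))) * (b - s) ^ d
      = ∫ s in -(b / d)..b, (b + b / (d * (d + 2)) - (b - s)) * (b - s) ^ d := by
        congr 1; funext s; ring
    _ = ∫ r in (0 : ℝ)..b * (d + 1) / d, ((b + b / (d * (d + 2))) * r ^ d - r ^ (d + 1)) := by
        rw [intervalIntegral.integral_comp_sub_left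
          (fun r => (b + b / (d * (d + 2)) - r) * r ^ d), sub_self, hL]
        congr 1; funext r; ring
    _ = (b * (d + 1) / d) ^ (d + 1) *
          ((b + b / (d * (d + 2))) / (d + 1) - b * (d + 1) / d / (d + 2)) := by
        rw [intervalIntegral.integral_sub, intervalIntegral.integral_const_mul, integral_pow,
          integral_pow, pow_succ _ (d + 1)]
        · push_cast; ring
        all_goals exact Continuous.intervalIntegrable (by fun_prop) _ _
    _ = 0 := by
        rw [mul_eq_zero]; right
        field_simp
        ring

theorem sq_clamp_sub_le {a b p : ℝ} (hap : a ≤ p) (hpb : p ≤ b) (y : ℝ) :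
    (max a (min y b) - p) ^ 2 ≤ (y - p) ^ 2 := by
  rcases le_total y a with h | h
  · rw [min_eq_left (h.trans (hap.trans hpb)), max_eq_left h]; nlinarith
  · rcases le_total y b with h' | h'
    · rw [min_eq_left h', max_eq_right h]
    · rw [min_eq_right h', max_eq_right (hap.trans hpb)]; nlinarith

theorem sq_le_mul_integral_sq_of_tail_cone {α : Type*} [MeasurableSpace α] {μ : Measure α}
    [IsProbabilityMeasure μ] {X : α → ℝ} (hXm : Measurable X) (hXint : Integrable X μ)
    (hX2 : Integrable (fun x => X x ^ 2) μ) (hmean : ∫ x, X x ∂μ = 0) {b : ℝ} (hb : 0 < b)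
    {d : ℕ} (hd : d ≠ 0)
    (hcone : ∀ s t, s ≤ t → t < b →
      μ.real {x | s ≤ X x} * (b - t) ^ d ≤ μ.real {x | t ≤ X x} * (b - s) ^ d) :
    b ^ 2 ≤ d * (d + 2) * ∫ x, X x ^ 2 ∂μ := by
  have hd' : (0 : ℝ) < d := by positivity
  set a := -(b / d)
  set p := -(b / (d * (d + 2)))
  have hap : a ≤ p := by
    simp only [a, p, neg_le_neg_iff]
    gcongr
    nlinarith
  have hpb : p < b := by
    have : 0 < b / (d * (d + 2)) := by positivity
    linarith
  have hzero : ∫ s in a..b, (s - p) * (b - s) ^ d = 0 := by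
    simpa only [p, sub_neg_eq_add] using intervalIntegral_add_mul_sub_pow_eq_zero b hd
  have hexpand : (fun x => (X x - p) ^ 2) = fun x => X x ^ 2 + (-2 * p * X x + p ^ 2) := by
    funext x; ring
  have hlin : Integrable (fun x => -2 * p * X x + p ^ 2) μ :=
    (hXint.const_mul _).add (integrable_const _)
  have hXp : Integrable (fun x => (X x - p) ^ 2) μ := hexpand ▸ hX2.add hlin
  have hclamp : Integrable (fun x => (max a (min (X x) b) - p) ^ 2) μ := by
    refine hXp.mono' (by fun_prop) (ae_of_all _ fun x => ?_)
    rw [Real.norm_of_nonneg (sq_nonneg _)]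
    exact sq_clamp_sub_le hap hpb.le (X x)
  have hsq : ∫ x, (X x - p) ^ 2 ∂μ = ∫ x, X x ^ 2 ∂μ + p ^ 2 := by
    rw [hexpand, integral_add hX2 hlin, integral_add (hXint.const_mul _) (integrable_const _),
      integral_const_mul, hmean, integral_const, probReal_univ]
    simp
  have htail := integral_sq_clamp_sub_sq_nonneg_of_cone μ hXm (hap.trans hpb.le) hpb hcone hzero
  rw [integral_sub hclamp (integrable_const _), integral_const, probReal_univ, one_smul] at htail
  have hmono : ∫ x, (max a (min (X x) b) - p) ^ 2 ∂μ ≤ ∫ x, (X x - p) ^ 2 ∂μ :=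
    integral_mono hclamp hXp fun x => sq_clamp_sub_le hap hpb.le (X x)
  have hvalue : (a - p) ^ 2 - p ^ 2 = b ^ 2 / (d * (d + 2)) := by
    simp only [a, p]
    field_simp
    ring
  rw [← div_le_iff₀' (by positivity), ← hvalue]
  linarith

theorem bddAbove_setIntegral_inner_sq {E : Type*} [NormedAddCommGroup E] [InnerProductSpace ℝ E]
    [MeasurableSpace E] [OpensMeasurableSpace E] (μ : Measure E) [IsFiniteMeasureOnCompacts μ]
    {K : Set E} (hK : IsCompact K) :
    BddAbove ((fun u => ∫ x in K, (inner ℝ x u : ℝ) ^ 2 ∂μ) '' {u | ‖u‖ = 1}) := by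
  refine ⟨∫ x in K, ‖x‖ ^ 2 ∂μ, ?_⟩
  rintro _ ⟨u, hu, rfl⟩
  refine integral_mono_of_nonneg (ae_of_all _ fun x => sq_nonneg _)
    ((continuous_norm.pow 2).continuousOn.integrableOn_compact hK) (ae_of_all _ fun x => ?_)
  have h := abs_real_inner_le_norm x u
  rw [show ‖u‖ = 1 from hu, mul_one] at h
  exact sq_le_sq' (abs_le.1 h).1 (abs_le.1 h).2

theorem stmt_14_general (d : ℕ) (hd : 1 ≤ d)
    (K : Set (EuclideanSpace ℝ (Fin d)))
    (hKcomp : IsCompact K) (hKconv : Convex ℝ K)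
    (hvol : volume K = 1)
    (hcenter : (∫ x in K, x) = 0) :
    ∀ x ∈ K, ‖x‖ ≤ ((d : ℝ) + 1) *
      Real.sqrt (sSup ((fun u : EuclideanSpace ℝ (Fin d) =>
        ∫ x in K, (inner ℝ x u : ℝ) ^ 2) '' {u | ‖u‖ = 1})) := by
  intro x hx
  rcases eq_or_ne x 0 with rfl | hx0
  · rw [norm_zero]; positivity
  set u : EuclideanSpace ℝ (Fin d) := (‖x‖⁻¹ : ℝ) • x
  have hux : inner ℝ u x = ‖x‖ := by
    rw [real_inner_smul_left, real_inner_self_eq_norm_sq]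
    field_simp [norm_ne_zero_iff.2 hx0]
  have : IsProbabilityMeasure (volume.restrict K) := ⟨by simp [hvol]⟩
  have hcont : Continuous fun y : EuclideanSpace ℝ (Fin d) => inner ℝ u y := by fun_prop
  have hmoment := sq_le_mul_integral_sq_of_tail_cone (μ := volume.restrict K) (d := d)
    hcont.measurable (hcont.continuousOn.integrableOn_compact hKcomp)
    ((hcont.pow 2).continuousOn.integrableOn_compact hKcomp)
    (by rw [integral_inner (f := fun y => y) (continuous_id.continuousOn.integrableOn_compact
      hKcomp), hcenter, inner_zero_right])
    (norm_pos_iff.2 hx0) (by omega) fun s t hst htb => by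
      simpa only [innerₗ_apply_apply, hux, finrank_euclideanSpace_fin] using
        hKconv.measureReal_restrict_mul_le volume (by simp [hvol]) hx (innerₗ _ u) hst
          (by simpa [hux] using htb)
  have hS := le_csSup (bddAbove_setIntegral_inner_sq volume hKcomp)
    ⟨u, norm_smul_inv_norm hx0, rfl⟩
  simp only [← real_inner_comm u] at hmoment
  have hI : 0 ≤ ∫ y in K, (inner ℝ y u) ^ 2 := integral_nonneg fun _ => sq_nonneg _
  rw [← Real.sqrt_sq (by positivity : (0 : ℝ) ≤ d + 1), ← Real.sqrt_mul (by positivity),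
    Real.le_sqrt (norm_nonneg _) (by nlinarith)]
  nlinarith

/-- Circumradius bound: a centered convex body `K ⊂ ℝ^d` of volume 1 satisfies
`R(K) ≤ (d+1) λ_max(Cov K)^{1/2}`, where `λ_max(Cov K)` is the largest eigenvalue
of the matrix of second moments, i.e. the supremum over unit vectors `u` of the
quadratic form `⟨Cov(K) u, u⟩ = ∫_K ⟨x,u⟩² dx`. -/
theorem stmt_14 (d : ℕ) (hd : 1 ≤ d)
    (K : Set (EuclideanSpace ℝ (Fin d)))
    (hKcomp : IsCompact K) (hKconv : Convex ℝ K) (hKint : (interior K).Nonempty)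
    (hvol : volume K = 1)
    (hcenter : (∫ x in K, x) = 0) :
    ∀ x ∈ K, ‖x‖ ≤ ((d : ℝ) + 1) *
      Real.sqrt (sSup ((fun u : EuclideanSpace ℝ (Fin d) =>
        ∫ x in K, (inner ℝ x u : ℝ) ^ 2) '' {u | ‖u‖ = 1})) :=
  stmt_14_general d hd K hKcomp hKconv hvol hcenter
end
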